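/- arXiv:0802.2666 — 2 statements merged into one kernel-verified Lean document; each statement's English description precedes it below -/
import Mathlib

section
/- Let R, a, c, Rc1, Rc2, Cf be reals with 0 < R < 1, a > 0, c > 0. Define R2 = R/(R + (1-R)*(1/c)), C2 = (1-R2)*Rc2 + R2*Rc2*(1 - 1/a) + (R2/a)*Cf*Rc1, and C = (1-R)*Rc2 + R*Cf*Rc1. If (1 - 1/c)*(1/R - 1) = (1 - (Rc1/Rc2)*Cf)*(1 - 1/a) and Rc2 ≠ 0 and C ≠ 0 and C2 ≠ 0, then R2/C2 = R/C. -/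
/-!
Write `D = R + (1 - R)/c`, so `R2 = R/D` and `R - R2 = -R2 (1 - R)(1 - 1/c)`. Multiplying the
design equation by `R Rc2` turns its left side into `(1 - R)(1 - 1/c) Rc2`, and substituting
this shows `R C2 = R2 C`: the capacities scale by the same factor `R2/R` as the rates, so the
ratios agree.
-/

lemma effective_rate_denom_pos {R c : ℝ} (hR0 : 0 < R) (hR1 : R ≤ 1) (hc : 0 ≤ c) :
    0 < R + (1 - R) * (1 / c) := by
  have : 0 ≤ (1 - R) * (1 / c) := by
    have := sub_nonneg.2 hR1
    positivity
  linarith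

section
variable {K : Type*} [Field K]

lemma sub_effective_rate {R c R2 : K} (hD : R + (1 - R) * (1 / c) ≠ 0)
    (hR2 : R2 = R / (R + (1 - R) * (1 / c))) :
    R - R2 = -(R2 * (1 - R) * (1 - 1 / c)) := by
  have hR : R = R2 * (R + (1 - R) * (1 / c)) := by rw [hR2, div_mul_cancel₀ _ hD]
  linear_combination hR

lemma design_eq_mul {R a c Rc1 Rc2 Cf : K} (hR0 : R ≠ 0) (hRc2 : Rc2 ≠ 0)
    (hdesign : (1 - 1 / c) * (1 / R - 1) = (1 - (Rc1 / Rc2) * Cf) * (1 - 1 / a)) :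
    (1 - R) * (1 - 1 / c) * Rc2 = R * (Rc2 - Rc1 * Cf) * (1 - 1 / a) := by
  have h := congrArg (· * (R * Rc2)) hdesign
  field_simp at h
  linear_combination h

lemma mul_capacity_eq {R a c Rc1 Rc2 Cf R2 : K} (hR0 : R ≠ 0) (hRc2 : Rc2 ≠ 0)
    (hD : R + (1 - R) * (1 / c) ≠ 0) (hR2 : R2 = R / (R + (1 - R) * (1 / c)))
    (hdesign : (1 - 1 / c) * (1 / R - 1) = (1 - (Rc1 / Rc2) * Cf) * (1 - 1 / a)) :
    R * ((1 - R2) * Rc2 + R2 * Rc2 * (1 - 1 / a) + (R2 / a) * Cf * Rc1) =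
      R2 * ((1 - R) * Rc2 + R * Cf * Rc1) := by
  linear_combination Rc2 * sub_effective_rate hD hR2 - R2 * design_eq_mul hR0 hRc2 hdesign

end

theorem stmt_2_general (R a c Rc1 Rc2 Cf R2 C2 C : ℝ)
    (hR0 : 0 < R) (hR1 : R < 1) (hc : 0 < c)
    (hR2 : R2 = R / (R + (1 - R) * (1 / c)))
    (hC2 : C2 = (1 - R2) * Rc2 + R2 * Rc2 * (1 - 1 / a) + (R2 / a) * Cf * Rc1)
    (hC : C = (1 - R) * Rc2 + R * Cf * Rc1)
    (hdesign : (1 - 1 / c) * (1 / R - 1) = (1 - (Rc1 / Rc2) * Cf) * (1 - 1 / a))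
    (hRc2ne : Rc2 ≠ 0) :
    R2 / C2 = R / C := by
  have hD := effective_rate_denom_pos hR0 hR1.le hc.le
  have hR2ne : R2 ≠ 0 := by rw [hR2]; positivity
  have hscale : C2 = R2 / R * C := by
    rw [div_mul_eq_mul_div, eq_div_iff hR0.ne', mul_comm, hC2, hC]
    exact mul_capacity_eq hR0.ne' hRc2ne hD.ne' hR2 hdesign
  rw [hscale, div_mul_eq_div_div, div_div_cancel₀ hR2ne]

theorem stmt_2 (R a c Rc1 Rc2 Cf R2 C2 C : ℝ)
    (hR0 : 0 < R) (hR1 : R < 1) (ha : 0 < a) (hc : 0 < c)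
    (hR2 : R2 = R / (R + (1 - R) * (1 / c)))
    (hC2 : C2 = (1 - R2) * Rc2 + R2 * Rc2 * (1 - 1 / a) + (R2 / a) * Cf * Rc1)
    (hC : C = (1 - R) * Rc2 + R * Cf * Rc1)
    (hdesign : (1 - 1 / c) * (1 / R - 1) = (1 - (Rc1 / Rc2) * Cf) * (1 - 1 / a))
    (hRc2ne : Rc2 ≠ 0) (hCne : C ≠ 0) (hC2ne : C2 ≠ 0) :
    R2 / C2 = R / C :=
  stmt_2_general R a c Rc1 Rc2 Cf R2 C2 C hR0 hR1 hc hR2 hC2 hC hdesign hRc2ne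
end

section
/- Let R, a, b, Rc1, Rc2, Cb be reals with 0 < R < 1, a > 0, b > 0. Define R1 = R/(R + (1-R)*(1/b)), C1 = (1-R1)*Rc1 + R1*(1 - 1/a)*Cb*Rc2 + Rc1*(R1/a), and C = (1-R)*Rc1 + R*Cb*Rc2. If (1 - 1/b)*(1/R - 1) = (1/a)*(1 - (Rc2/Rc1)*Cb) and Rc1 ≠ 0 and C ≠ 0 and C1 ≠ 0, then R1/C1 = R/C. -/
/-!
Write `D = R + (1 - R) / b`, the fraction of the codeword that encoder `X1` actually transmits,
so that `R1 = R / D`. Multiplied out, the design equation says exactly that the capacity of the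
unpunctured test channel is `C = D * C1`; hence `R1 / C1 = R / (D * C1) = R / C`.
-/

lemma design_eq_mul_out {R a b Rc1 Rc2 Cb : ℝ} (hR : R ≠ 0) (hRc1 : Rc1 ≠ 0)
    (hdesign : (1 - 1 / b) * (1 / R - 1) = (1 / a) * (1 - (Rc2 / Rc1) * Cb)) :
    (1 - 1 / b) * (1 - R) * Rc1 = (1 / a) * R * (Rc1 - Rc2 * Cb) := by
  have hRinv : R * (1 / R) = 1 := by field_simp
  have hRc1inv : Rc1 * (Rc2 / Rc1) = Rc2 := by field_simp
  linear_combination (R * Rc1) * hdesign - (1 - 1 / b) * Rc1 * hRinv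
    - (1 / a) * R * Cb * hRc1inv

lemma capacity_eq_mul_of_design {R a b Rc1 Rc2 Cb R1 : ℝ}
    (hR1 : R1 * (R + (1 - R) * (1 / b)) = R)
    (hdesign : (1 - 1 / b) * (1 - R) * Rc1 = (1 / a) * R * (Rc1 - Rc2 * Cb)) :
    (1 - R) * Rc1 + R * Cb * Rc2 = (R + (1 - R) * (1 / b)) *
      ((1 - R1) * Rc1 + R1 * (1 - 1 / a) * Cb * Rc2 + Rc1 * (R1 / a)) := by
  linear_combination hdesign + (Rc1 - (1 - 1 / a) * Cb * Rc2 - Rc1 / a) * hR1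

theorem stmt_3_general (R a b Rc1 Rc2 Cb R1 C1 C : ℝ)
    (hR0 : 0 < R) (hR1 : R < 1) (hb : 0 < b)
    (hR1def : R1 = R / (R + (1 - R) * (1 / b)))
    (hC1 : C1 = (1 - R1) * Rc1 + R1 * (1 - 1 / a) * Cb * Rc2 + Rc1 * (R1 / a))
    (hC : C = (1 - R) * Rc1 + R * Cb * Rc2)
    (hdesign : (1 - 1 / b) * (1 / R - 1) = (1 / a) * (1 - (Rc2 / Rc1) * Cb))
    (hRc1ne : Rc1 ≠ 0) :
    R1 / C1 = R / C := by
  have hD : R + (1 - R) * (1 / b) ≠ 0 := by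
    have : 0 < 1 - R := by linarith
    positivity
  have hR1D : R1 * (R + (1 - R) * (1 / b)) = R := by
    rw [hR1def, div_mul_cancel₀ _ hD]
  have hCD : C = (R + (1 - R) * (1 / b)) * C1 := by
    rw [hC, hC1]
    exact capacity_eq_mul_of_design hR1D (design_eq_mul_out hR0.ne' hRc1ne hdesign)
  rw [hR1def, hCD, div_div]

theorem stmt_3 (R a b Rc1 Rc2 Cb R1 C1 C : ℝ)
    (hR0 : 0 < R) (hR1 : R < 1) (ha : 0 < a) (hb : 0 < b)
    (hR1def : R1 = R / (R + (1 - R) * (1 / b)))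
    (hC1 : C1 = (1 - R1) * Rc1 + R1 * (1 - 1 / a) * Cb * Rc2 + Rc1 * (R1 / a))
    (hC : C = (1 - R) * Rc1 + R * Cb * Rc2)
    (hdesign : (1 - 1 / b) * (1 / R - 1) = (1 / a) * (1 - (Rc2 / Rc1) * Cb))
    (hRc1ne : Rc1 ≠ 0) (hCne : C ≠ 0) (hC1ne : C1 ≠ 0) :
    R1 / C1 = R / C :=
  stmt_3_general R a b Rc1 Rc2 Cb R1 C1 C hR0 hR1 hb hR1def hC1 hC hdesign hRc1ne
end
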